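/- Let A be a noncomputable Δ⁰₂ sequence and let Φ_A be the tally functional mapping X to 1^{θ(X,0)} 0 1^{θ(X,1)} 0 ⋯ (with the output continuing as 1^ω as soon as some θ(X,n) = +∞), where θ(X,n) is the least s with X↾n = A_s↾n. Then the pushforward measure μ = λ_{Φ_A} is trivial: μ assigns measure 1 to its set of atoms, equivalently to a countable set of sequences. -/

import Mathlib

/-!
Every `X` falls into one of three cases. If some `θ(X, n) = ∞`, then `Φ_A(X)` has only finitely
many zeros. Otherwise every prefix of `X` is a prefix of some `A_s`: either `X` is one of the
`A_s`, or `X = A`, because `X` differs from each of the finitely many `A_s` with `s < N` below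
some length, so its long prefixes are matched only at stages where `A_s(i)` has settled to `A(i)`.
Hence the range of `Φ_A` is countable, and a measure carried by a countable set is carried by
its atoms.
-/

open MeasureTheory Filter

/-- Cantor space `2^ω`. -/
abbrev Cantor : Type := ℕ → Bool

/-- The first `n` bits of a sequence, as a finite binary string. -/
def pref (X : Cantor) (n : ℕ) : List Bool := List.ofFn fun i : Fin n => X i

/-- The basic open (cylinder) set determined by a finite string `σ`. -/
def cyl (σ : List Bool) : Set Cantor := {X | pref X σ.length = σ}

/-- Partial recursiveness relative to an oracle `O : ℕ → ℕ`
(the clauses of `Nat.Partrec` plus an oracle clause). -/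
inductive RecIn (O : ℕ → ℕ) : (ℕ →. ℕ) → Prop
  | zero : RecIn O (pure 0)
  | succ : RecIn O Nat.succ
  | left : RecIn O ↑fun n : ℕ => n.unpair.1
  | right : RecIn O ↑fun n : ℕ => n.unpair.2
  | oracle : RecIn O ↑O
  | pair {f g} : RecIn O f → RecIn O g → RecIn O fun n => Nat.pair <$> f n <*> g n
  | comp {f g} : RecIn O f → RecIn O g → RecIn O fun n => g n >>= f
  | prec {f g} : RecIn O f → RecIn O g → RecIn O (Nat.unpaired fun a n =>
      n.rec (f a) fun y IH => do let i ← IH; g (Nat.pair a (Nat.pair y i)))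
  | rfind {f} : RecIn O f →
      RecIn O fun a => Nat.rfind fun n => (fun m => m = 0) <$> f (Nat.pair a n)

/-- `f` is computable relative to the oracle `A ∈ 2^ω`. -/
def ComputableInOrc (A : Cantor) {α β : Type} [Primcodable α] [Primcodable β]
    (f : α → β) : Prop :=
  RecIn (fun n => (A n).toNat) fun n =>
    Part.bind (Part.ofOption (Encodable.decode (α := α) n)) fun a =>
      Part.some (Encodable.encode (f a))

/-- `X ∈ 2^ω` is a computable sequence. -/
def ComputableSeq (X : Cantor) : Prop := Computable X

/-- A computable real: one with a computable sequence of rational approximations. -/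
def ComputableReal (r : ℝ) : Prop :=
  ∃ q : ℕ → ℚ, Computable q ∧ ∀ n, |r - (q n : ℝ)| ≤ (2 : ℝ)⁻¹ ^ n

/-- A computable probability measure on Cantor space: the measures of cylinders are
uniformly computable reals. -/
def ComputableMeasure (μ : Measure Cantor) : Prop :=
  IsProbabilityMeasure μ ∧
    ∃ q : List Bool → ℕ → ℚ, Computable₂ q ∧
      ∀ σ n, |(μ (cyl σ)).toReal - (q σ n : ℝ)| ≤ (2 : ℝ)⁻¹ ^ n

/-- A uniformly effectively open sequence of classes: each `U i` is the union of a
computable enumeration of cylinders. -/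
def EffOpen (U : ℕ → Set Cantor) : Prop :=
  ∃ f : ℕ → ℕ → Option (List Bool), Computable₂ f ∧
    ∀ i, U i = ⋃ n : ℕ, Option.elim (f i n) ∅ cyl

/-- A uniformly `A`-effectively open sequence of classes. -/
def EffOpenIn (A : Cantor) (U : ℕ → Set Cantor) : Prop :=
  ∃ f : ℕ → ℕ → Option (List Bool), ComputableInOrc A (fun p : ℕ × ℕ => f p.1 p.2) ∧
    ∀ i, U i = ⋃ n : ℕ, Option.elim (f i n) ∅ cyl

/-- A `μ`-Martin-Löf test. -/
def MLTest (μ : Measure Cantor) (U : ℕ → Set Cantor) : Prop :=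
  EffOpen U ∧ ∀ i, μ (U i) ≤ (2 : ENNReal)⁻¹ ^ i

/-- `X` is `μ`-Martin-Löf random. -/
def MLRandom (μ : Measure Cantor) (X : Cantor) : Prop :=
  ∀ U : ℕ → Set Cantor, MLTest μ U → X ∉ ⋂ i, U i

/-- A `μ`-Martin-Löf test relative to the oracle `A`. -/
def MLTestIn (A : Cantor) (μ : Measure Cantor) (U : ℕ → Set Cantor) : Prop :=
  EffOpenIn A U ∧ ∀ i, μ (U i) ≤ (2 : ENNReal)⁻¹ ^ i

/-- `X` is `μ`-Martin-Löf random relative to the oracle `A`. -/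
def MLRandomIn (A : Cantor) (μ : Measure Cantor) (X : Cantor) : Prop :=
  ∀ U : ℕ → Set Cantor, MLTestIn A μ U → X ∉ ⋂ i, U i

/-- A `μ`-Schnorr test: a Martin-Löf test whose levels have measure exactly `2⁻ⁱ`. -/
def SchnorrTest (μ : Measure Cantor) (U : ℕ → Set Cantor) : Prop :=
  EffOpen U ∧ ∀ i, μ (U i) = (2 : ENNReal)⁻¹ ^ i

/-- `X` is `μ`-Schnorr random. -/
def SchnorrRandom (μ : Measure Cantor) (X : Cantor) : Prop :=
  ∀ U : ℕ → Set Cantor, SchnorrTest μ U → X ∉ ⋂ i, U i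

/-- The set of atoms of `μ`. -/
def Atoms (μ : Measure Cantor) : Set Cantor := {X | 0 < μ {X}}

/-- `lam` is the uniform (Lebesgue) measure on Cantor space. -/
def IsLebesgue (lam : Measure Cantor) : Prop :=
  ∀ σ : List Bool, lam (cyl σ) = (2 : ENNReal)⁻¹ ^ σ.length

/-- A total (truth-table) functional: every output bit is a computable function of a
computably bounded finite initial segment of the input. -/
def TTFunctional (Φ : Cantor → Cantor) : Prop :=
  ∃ (u : ℕ → ℕ) (g : List Bool → ℕ → Bool), Computable u ∧ Computable₂ g ∧
    ∀ X n, Φ X n = g (pref X (u n)) n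

/-- `B` is a Δ⁰₂ sequence: it has a uniformly computable approximation converging
pointwise to it. -/
def Delta02 (B : Cantor) : Prop :=
  ∃ Bs : ℕ → Cantor, Computable₂ (fun s n => Bs s n) ∧
    ∀ n, ∃ N, ∀ s, N ≤ s → Bs s n = B n

/-- `theta As X n` is the least stage `s` with `X↾n = As s↾n`, and `⊤ = +∞` if there
is no such stage. -/
noncomputable def theta (As : ℕ → Cantor) (X : Cantor) (n : ℕ) : ℕ∞ :=
  sInf {e : ℕ∞ | ∃ s : ℕ, e = (s : ℕ∞) ∧ pref X n = pref (As s) n}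

open Classical in
/-- The tally functional determined by the approximation `As`: the output is
`1^{θ(X,0)} 0 1^{θ(X,1)} 0 ⋯`, continuing with `1^ω` as soon as some `θ(X,n) = +∞`
(position `k` is a `0` exactly when `k = θ(X,0) + ⋯ + θ(X,m) + m` for some `m`). -/
noncomputable def tally (As : ℕ → Cantor) (X : Cantor) : Cantor := fun k =>
  if ∃ m : ℕ, (k : ℕ∞) = (∑ i ∈ Finset.range (m + 1), theta As X i) + (m : ℕ∞)
    then false else true

/-- The join `A ⊕ B` of two sequences. -/
def join (A B : Cantor) : Cantor := fun k => if k % 2 = 0 then A (k / 2) else B (k / 2)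

open Set

lemma pref_eq_pref_iff {X Y : Cantor} {n : ℕ} : pref X n = pref Y n ↔ ∀ i < n, X i = Y i := by
  simp [pref, List.ofFn_inj, funext_iff, Fin.forall_iff]

lemma theta_eq_top_iff {As : ℕ → Cantor} {X : Cantor} {n : ℕ} :
    theta As X n = ⊤ ↔ ∀ s, pref X n ≠ pref (As s) n := by
  simp only [theta, sInf_eq_top, mem_ofPred_eq]
  constructor
  · intro h s hs
    exact ENat.natCast_ne_top s (h s ⟨s, rfl, hs⟩)
  · rintro h _ ⟨s, -, hs⟩
    exact absurd hs (h s)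

lemma theta_dependsOn (As : ℕ → Cantor) (n : ℕ) : DependsOn (theta As · n) (Iio n) := by
  intro X Y h
  simp only [theta, pref_eq_pref_iff.2 fun i hi => h i hi]

lemma tally_eq_false_iff {As : ℕ → Cantor} {X : Cantor} {k : ℕ} :
    tally As X k = false ↔
      ∃ m : ℕ, (k : ℕ∞) = (∑ i ∈ Finset.range (m + 1), theta As X i) + m := by
  simp [tally]

lemma tally_apply_dependsOn (As : ℕ → Cantor) (k : ℕ) : DependsOn (tally As · k) (Iio k) := by
  intro X Y h
  have hsum : ∀ m ≤ k, ∑ i ∈ Finset.range (m + 1), theta As X i =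
      ∑ i ∈ Finset.range (m + 1), theta As Y i := fun m hm =>
    Finset.sum_congr rfl fun i hi => theta_dependsOn As i fun j hj =>
      h j (by simp only [Finset.mem_range, mem_Iio] at hi hj ⊢; omega)
  have hle : ∀ {m : ℕ} {S : ℕ∞}, (k : ℕ∞) = S + m → m ≤ k := fun hm => by
    exact_mod_cast hm ▸ le_add_self
  classical
  exact if_congr (exists_congr fun m =>
    ⟨fun hm => by rwa [← hsum m (hle hm)], fun hm => by rwa [hsum m (hle hm)]⟩) rfl rfl

theorem DependsOn.measurable_of_finite {ι : Type*} {α : ι → Type*} {β : Type*}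
    [∀ i, MeasurableSpace (α i)] [∀ i, Countable (α i)] [∀ i, MeasurableSingletonClass (α i)]
    [MeasurableSpace β] [Nonempty β] {f : (Π i, α i) → β} {s : Set ι} (hs : s.Finite)
    (hf : DependsOn f s) : Measurable f := by
  have := hs.to_subtype
  obtain ⟨g, rfl⟩ := dependsOn_iff_exists_comp.1 hf
  exact (measurable_of_countable g).comp (measurable_pi_lambda _ fun i => measurable_pi_apply _)

lemma measurable_tally (As : ℕ → Cantor) : Measurable (tally As) :=
  measurable_pi_lambda _ fun k => (tally_apply_dependsOn As k).measurable_of_finite (finite_Iio k)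

lemma eq_of_forall_pref_eq_pref_approx {A X : Cantor} {As : ℕ → Cantor}
    (hconv : ∀ n, ∃ N, ∀ s, N ≤ s → As s n = A n)
    (hpref : ∀ n, ∃ s, pref X n = pref (As s) n) (hX : ∀ s, X ≠ As s) : X = A := by
  funext i
  obtain ⟨N, hN⟩ := hconv i
  choose d hd using fun s => Function.ne_iff.mp (hX s)
  obtain ⟨s, hs⟩ := hpref (max (i + 1) ((Finset.range N).sup d + 1))
  rw [pref_eq_pref_iff] at hs
  by_cases hsN : s < N
  · have := Finset.le_sup (f := d) (Finset.mem_range.2 hsN)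
    exact absurd (hs (d s) (by omega)) (hd s)
  · rw [hs i (by omega), hN s (by omega)]

lemma finite_setOf_tally_eq_false {As : ℕ → Cantor} {X : Cantor} {n : ℕ}
    (hn : theta As X n = ⊤) : {k | tally As X k = false}.Finite := by
  refine ((Finset.range n).finite_toSet.image
    fun m => ((∑ i ∈ Finset.range (m + 1), theta As X i) + m).toNat).subset ?_
  intro k hk
  obtain ⟨m, hm⟩ := tally_eq_false_iff.1 hk
  have hmn : m < n := by
    by_contra! hnm
    have : theta As X n ≤ ∑ i ∈ Finset.range (m + 1), theta As X i :=
      Finset.single_le_sum (fun _ _ => zero_le) (Finset.mem_range.2 (by omega))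
    rw [hn, top_le_iff] at this
    simp [this] at hm
  exact ⟨m, Finset.mem_range.2 hmn, by simp only [← hm, ENat.toNat_natCast]⟩

lemma countable_setOf_finite_eq_false : {Y : Cantor | {k | Y k = false}.Finite}.Countable := by
  refine MapsTo.countable_of_injOn (f := fun Y : Cantor => {k | Y k = false})
    (fun Y hY => hY) ?_ Countable.ofPred_finite
  intro Y _ Z _ hYZ
  funext k
  simpa using congrArg (k ∈ ·) hYZ

lemma countable_range_tally {A : Cantor} {As : ℕ → Cantor}
    (hconv : ∀ n, ∃ N, ∀ s, N ≤ s → As s n = A n) : (range (tally As)).Countable := by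
  refine ((((countable_range As).insert A).image (tally As)).union
    countable_setOf_finite_eq_false).mono ?_
  rintro _ ⟨X, rfl⟩
  by_cases hθ : ∃ n, theta As X n = ⊤
  · obtain ⟨n, hn⟩ := hθ
    exact Or.inr (finite_setOf_tally_eq_false hn)
  push Not at hθ
  refine Or.inl ⟨X, ?_, rfl⟩
  by_cases hX : ∃ s, X = As s
  · obtain ⟨s, rfl⟩ := hX
    exact Or.inr ⟨s, rfl⟩
  push Not at hX
  have hpref : ∀ n, ∃ s, pref X n = pref (As s) n := fun n => by
    simpa [theta_eq_top_iff] using hθ n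
  exact Or.inl (eq_of_forall_pref_eq_pref_approx hconv hpref hX)

lemma measure_atoms_eq_measure_univ {μ : Measure Cantor} {C : Set Cantor} (hC : C.Countable)
    (hμC : μ Cᶜ = 0) : μ (Atoms μ) = μ univ := by
  have hnull : μ (C \ Atoms μ) = 0 := by
    rw [← biUnion_of_singleton (C \ Atoms μ), measure_biUnion_null_iff (hC.mono sdiff_subset)]
    intro x hx
    simpa [Atoms] using hx.2
  refine measure_congr (ae_eq_univ.2 (measure_mono_null ?_ (measure_union_null hnull hμC)))
  intro x hx
  by_cases hxC : x ∈ C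
  exacts [Or.inl ⟨hxC, hx⟩, Or.inr hxC]

theorem stmt14_general (lam : Measure Cantor) (hlam : IsLebesgue lam)
    (A : Cantor) (As : ℕ → Cantor)
    (hconv : ∀ n, ∃ N, ∀ s, N ≤ s → As s n = A n) :
    Measure.map (tally As) lam (Atoms (Measure.map (tally As) lam)) = 1 := by
  have hmeas := measurable_tally As
  have hcount := countable_range_tally hconv
  have hnull : Measure.map (tally As) lam (range (tally As))ᶜ = 0 := by
    rw [Measure.map_apply hmeas hcount.measurableSet.compl]
    simp
  rw [measure_atoms_eq_measure_univ hcount hnull, Measure.map_apply hmeas MeasurableSet.univ,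
    preimage_univ]
  simpa [cyl, pref] using hlam []

/-- The pushforward of Lebesgue measure under the tally functional of a noncomputable
Δ⁰₂ sequence is a trivial measure: its atoms have total measure `1`. -/
theorem stmt14 (lam : Measure Cantor) (hlam : IsLebesgue lam)
    (A : Cantor) (hA : ¬ ComputableSeq A) (As : ℕ → Cantor)
    (hAs : Computable₂ (fun s n => As s n))
    (hconv : ∀ n, ∃ N, ∀ s, N ≤ s → As s n = A n)
    (hne : ∀ s, As s ≠ As (s + 1)) :
    Measure.map (tally As) lam (Atoms (Measure.map (tally As) lam)) = 1 :=
  stmt14_general lam hlam A As hconv
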